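/- arXiv:1004.4076 — 2 statements merged into one kernel-verified Lean document; each statement's English description precedes it below -/
import Mathlib

section
/- Let z ≠ 0 and ε > 0, and let κ_ε^z be the kernel κ_ε^z(s) = ε^{-1}κ^z(s/ε) with κ^z(σ) = (2/z²)(z+σ) on [-z,0] (for z > 0) and the mirrored definition for z < 0, zero elsewhere. Then the k-th Fourier coefficient of κ_ε^z viewed as a function on [0,1] equals -(2/(ω²z²))(e^{iωz} - 1 - iωz), where ω = 2πkε, and consequently 1 - κ̂_ε^z(k) = (2/(ω²z²))(e^{iωz} - 1 - iωz + ω²z²/2). -/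
open Real Complex

/-- The triangular kernel `κ^z`. -/
noncomputable def kappa (z σ : ℝ) : ℝ :=
  if -z ≤ σ ∧ σ ≤ 0 then 2 / z ^ 2 * (z + σ)
  else if 0 ≤ σ ∧ σ ≤ -z then -(2 / z ^ 2 * (z + σ))
  else 0

/-- The rescaled kernel `κ_ε^z(s) = ε⁻¹ κ^z(s/ε)`. -/
noncomputable def kappaE (ε z s : ℝ) : ℝ := ε⁻¹ * kappa z (s / ε)

open Set MeasureTheory

/-!
Substituting `x = εσ` turns the coefficient into `∫ κ^z(σ) e^{-iωσ} dσ`. For either sign of `z`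
this is `(2/z²) ∫_{-z}^{0} (σ + z) e^{-iωσ} dσ`: for `z < 0` the sign in the definition of `κ^z`
is absorbed by the orientation of the interval. The primitive `((σ + z)/c - 1/c²) e^{cσ}` with
`c = -iω` then gives the closed form.
-/

theorem kappa_eq_indicator_of_pos {z : ℝ} (hz : 0 < z) :
    kappa z = (Icc (-z) 0).indicator fun σ => 2 / z ^ 2 * (z + σ) := by
  ext σ
  by_cases hσ : -z ≤ σ ∧ σ ≤ 0
  · rw [indicator_of_mem (show σ ∈ Icc (-z) 0 from hσ), kappa, if_pos hσ]
  · rw [indicator_of_notMem (show σ ∉ Icc (-z) 0 from hσ), kappa, if_neg hσ, if_neg]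
    rintro ⟨h₀, h₁⟩
    linarith

theorem kappa_eq_indicator_of_neg {z : ℝ} (hz : z < 0) :
    kappa z = (Icc 0 (-z)).indicator fun σ => -(2 / z ^ 2 * (z + σ)) := by
  ext σ
  by_cases hσ : 0 ≤ σ ∧ σ ≤ -z
  · rw [indicator_of_mem (show σ ∈ Icc 0 (-z) from hσ), kappa, if_neg, if_pos hσ]
    rintro ⟨h₀, h₁⟩
    linarith [hσ.1]
  · rw [indicator_of_notMem (show σ ∉ Icc 0 (-z) from hσ), kappa, if_neg, if_neg hσ]
    rintro ⟨h₀, h₁⟩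
    exact hσ ⟨by linarith, by linarith⟩

theorem integral_kappa_mul {z : ℝ} (hz : z ≠ 0) (φ : ℝ → ℂ) :
    ∫ σ, (kappa z σ : ℂ) * φ σ = 2 / (z : ℂ) ^ 2 * ∫ σ in -z..0, ((σ : ℂ) + z) * φ σ := by
  rw [← intervalIntegral.integral_const_mul]
  rcases hz.lt_or_gt with hz | hz
  · have h : (fun σ => (kappa z σ : ℂ) * φ σ) =
        (Icc 0 (-z)).indicator fun σ => -(2 / (z : ℂ) ^ 2 * (((σ : ℂ) + z) * φ σ)) := by
      ext σ
      rw [kappa_eq_indicator_of_neg hz]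
      by_cases hσ : σ ∈ Icc 0 (-z) <;> simp [hσ, mul_assoc, add_comm]
    rw [h, integral_indicator measurableSet_Icc, integral_Icc_eq_integral_Ioc,
      ← intervalIntegral.integral_of_le (by linarith), intervalIntegral.integral_neg,
      intervalIntegral.integral_symm, neg_neg]
  · have h : (fun σ => (kappa z σ : ℂ) * φ σ) =
        (Icc (-z) 0).indicator fun σ => 2 / (z : ℂ) ^ 2 * (((σ : ℂ) + z) * φ σ) := by
      ext σ
      rw [kappa_eq_indicator_of_pos hz]
      by_cases hσ : σ ∈ Icc (-z) 0 <;> simp [hσ, mul_assoc, add_comm]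
    rw [h, integral_indicator measurableSet_Icc, integral_Icc_eq_integral_Ioc,
      ← intervalIntegral.integral_of_le (by linarith)]

theorem integral_kappaE_mul {ε : ℝ} (hε : 0 < ε) (z : ℝ) (f : ℝ → ℂ) :
    ∫ x, (kappaE ε z x : ℂ) * f x = ∫ σ, (kappa z σ : ℂ) * f (ε * σ) := by
  have h := Measure.integral_comp_div (fun σ => (kappa z σ : ℂ) * f (ε * σ)) ε
  simp only [mul_div_cancel₀ _ hε.ne', abs_of_pos hε] at h
  simp only [kappaE, ofReal_mul, ofReal_inv, mul_assoc, integral_const_mul, h,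
    real_smul, inv_mul_cancel_left₀ (ofReal_ne_zero.mpr hε.ne')]

theorem integral_sub_mul_cexp {a b : ℝ} {c : ℂ} (hc : c ≠ 0) :
    ∫ x in a..b, ((x : ℂ) - a) * cexp (c * x) =
      ((b - a) / c - 1 / c ^ 2) * cexp (c * b) + cexp (c * a) / c ^ 2 := by
  have hderiv (x : ℝ) : HasDerivAt (fun x : ℝ => (((x : ℂ) - a) / c - 1 / c ^ 2) * cexp (c * x))
      (((x : ℂ) - a) * cexp (c * x)) x := by
    have h : HasDerivAt (fun w : ℂ => ((w - a) / c - 1 / c ^ 2) * cexp (c * w))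
        ((x - a) * cexp (c * x)) x :=
      (((((hasDerivAt_id' (x : ℂ)).sub_const (a : ℂ)).div_const c).sub_const (1 / c ^ 2)).mul
        ((hasDerivAt_id' (x : ℂ)).const_mul c).cexp).congr_deriv (by field_simp; ring)
    exact h.comp_ofReal
  rw [intervalIntegral.integral_eq_sub_of_hasDerivAt (fun x _ => hderiv x)
    ((by fun_prop : Continuous fun x : ℝ => ((x : ℂ) - a) * cexp (c * x)).intervalIntegrable a b)]
  ring

theorem fourierCoeff_kappa (z ε : ℝ) (hz : z ≠ 0) (hε : 0 < ε) (k : ℤ) (hk : k ≠ 0)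
    (ω : ℝ) (hω : ω = 2 * π * k * ε) :
    (∫ x : ℝ, (kappaE ε z x : ℂ) * Complex.exp (-(2 * π * Complex.I * k * x)))
        = -(2 / ((ω : ℂ) ^ 2 * (z : ℂ) ^ 2)) *
            (Complex.exp (Complex.I * ω * z) - 1 - Complex.I * ω * z) ∧
    1 - (∫ x : ℝ, (kappaE ε z x : ℂ) * Complex.exp (-(2 * π * Complex.I * k * x)))
        = 2 / ((ω : ℂ) ^ 2 * (z : ℂ) ^ 2) *
            (Complex.exp (Complex.I * ω * z) - 1 - Complex.I * ω * z
              + (ω : ℂ) ^ 2 * (z : ℂ) ^ 2 / 2) := by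
  have hω₀ : (ω : ℂ) ≠ 0 := by
    rw [hω]
    push_cast
    simp [hk, hε.ne', pi_ne_zero]
  have hz₀ : (z : ℂ) ≠ 0 := ofReal_ne_zero.mpr hz
  have hcoeff : ∫ x : ℝ, (kappaE ε z x : ℂ) * cexp (-(2 * π * I * k * x)) =
      -(2 / ((ω : ℂ) ^ 2 * (z : ℂ) ^ 2)) * (cexp (I * ω * z) - 1 - I * ω * z) := by
    have hexp (σ : ℝ) : cexp (-(2 * π * I * k * ((ε * σ : ℝ) : ℂ))) = cexp (-(I * ω) * σ) := by
      rw [hω]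
      push_cast
      ring_nf
    rw [integral_kappaE_mul hε z fun x : ℝ => cexp (-(2 * π * I * k * x))]
    simp only [hexp]
    have hprimitive := integral_sub_mul_cexp (a := -z) (b := 0) (c := -(I * ω)) (by simp [hω₀])
    push_cast [sub_neg_eq_add] at hprimitive
    rw [integral_kappa_mul hz, hprimitive, mul_zero, Complex.exp_zero, zero_add, neg_mul_neg]
    field_simp
    rw [I_sq]
    ring
  refine ⟨hcoeff, ?_⟩
  rw [hcoeff]
  field_simp
  ring
end

section
/- For every real ω ≠ 0, (4/ω⁴)·[2 - 2e^{-ω²/4} + (3/16)ω⁴ - (1/2)ω²e^{-ω²/4} - (1/4)ω⁴e^{-ω²/4}] ≤ (5/6)·(1 - e^{-ω²/4}). -/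
/-!
With `s = ω²/4` the claim, cleared of the factor `ω⁴ = 16 s²`, says that
`g s = e^{-s} (2 + 2s + 2s²/3) + s²/3 - 2` is nonnegative for `s ≥ 0`. Since `g 0 = 0` and
`g' s = (2/3) s (1 - e^{-s} (1 + s))`, which is nonnegative because `1 + s ≤ e^s`, `g` is monotone
on `[0, ∞)`.
-/

open Real Set

lemma exp_neg_mul_one_add_le_one (x : ℝ) : exp (-x) * (1 + x) ≤ 1 := by
  calc exp (-x) * (1 + x) ≤ exp (-x) * exp x := by
        gcongr; linarith [add_one_le_exp x]
    _ = 1 := by rw [← exp_add, neg_add_cancel, exp_zero]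

lemma hasDerivAt_exp_neg_mul_quadratic (x : ℝ) :
    HasDerivAt (fun s : ℝ => exp (-s) * (2 + 2 * s + 2 / 3 * s ^ 2) + s ^ 2 / 3 - 2)
      (2 / 3 * x * (1 - exp (-x) * (1 + x))) x := by
  have hexp : HasDerivAt (fun s : ℝ => exp (-s)) (-exp (-x)) x := by
    simpa using (hasDerivAt_neg x).exp
  have hsq : HasDerivAt (fun s : ℝ => s ^ 2) (2 * x) x := by
    simpa using hasDerivAt_pow 2 x
  have hquad : HasDerivAt (fun s : ℝ => 2 + 2 * s + 2 / 3 * s ^ 2) (2 * 1 + 2 / 3 * (2 * x)) x :=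
    (((hasDerivAt_id' x).const_mul 2).const_add 2).add (hsq.const_mul (2 / 3))
  refine (((hexp.mul hquad).add (hsq.div_const 3)).sub_const 2).congr_deriv ?_
  ring

lemma monotoneOn_exp_neg_mul_quadratic :
    MonotoneOn (fun s : ℝ => exp (-s) * (2 + 2 * s + 2 / 3 * s ^ 2) + s ^ 2 / 3 - 2) (Ici 0) := by
  refine monotoneOn_of_deriv_nonneg (convex_Ici 0)
    (fun x _ => (hasDerivAt_exp_neg_mul_quadratic x).continuousAt.continuousWithinAt)
    (fun x _ => (hasDerivAt_exp_neg_mul_quadratic x).differentiableAt.differentiableWithinAt)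
    fun x hx => ?_
  rw [interior_Ici, mem_Ioi] at hx
  rw [(hasDerivAt_exp_neg_mul_quadratic x).deriv]
  have := exp_neg_mul_one_add_le_one x
  exact mul_nonneg (by positivity) (by linarith)

lemma two_mul_one_sub_exp_neg_le (s : ℝ) (hs : 0 ≤ s) :
    2 * (1 - exp (-s)) ≤ s ^ 2 / 3 + 2 * s * exp (-s) + 2 / 3 * s ^ 2 * exp (-s) := by
  have h := monotoneOn_exp_neg_mul_quadratic self_mem_Ici hs hs
  simp only [neg_zero, exp_zero] at h
  linarith

theorem omega_ineq (ω : ℝ) (hω : ω ≠ 0) :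
    4 / ω ^ 4 * (2 - 2 * Real.exp (-ω ^ 2 / 4) + 3 / 16 * ω ^ 4
        - 1 / 2 * ω ^ 2 * Real.exp (-ω ^ 2 / 4) - 1 / 4 * ω ^ 4 * Real.exp (-ω ^ 2 / 4))
      ≤ 5 / 6 * (1 - Real.exp (-ω ^ 2 / 4)) := by
  set s := ω ^ 2 / 4 with hs_def
  have hω2 : ω ^ 2 = 4 * s := by rw [hs_def]; ring
  have hω4 : ω ^ 4 = 16 * s ^ 2 := by rw [show ω ^ 4 = (ω ^ 2) ^ 2 by ring, hω2]; ring
  have hs : 0 < s := by positivity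
  rw [show -ω ^ 2 / 4 = -s by ring, hω2, hω4, div_mul_eq_mul_div, div_le_iff₀ (by positivity)]
  linarith [two_mul_one_sub_exp_neg_le s hs.le]
end
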